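/- arXiv:math/0605153 — 3 statements merged into one kernel-verified Lean document; each statement's English description precedes it below -/
import Mathlib

section
/- Consider the scalar ODE z' = zⁿ with n ≥ 2 on the interval [0, ω] with ω > 0, as an equation for a complex-valued function z. The solutions satisfying z(0) = z(ω) are exactly the constant solutions z ≡ c where c = 0 or c^{n-1} = −1/((n-1)ω); in particular there are exactly n initial values c ∈ ℂ for which the solution z(t,c) is defined on [0, ω] and satisfies z(ω,c) = z(0,c). -/
/-!
A solution of `z' = zⁿ` that vanishes somewhere vanishes everywhere, by uniqueness for the
locally Lipschitz field `z ↦ zⁿ`. A nowhere vanishing solution satisfies the conservation law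
`z ^ (1 - n) + (n - 1) t = const`, so `z ω = z 0` would force `(n - 1) ω = 0`. Hence `z ≡ 0` is the
only periodic solution, and the count is `0` together with the `n - 1` distinct `(n - 1)`-th roots
of `-1 / ((n - 1) ω)`.
-/

open Set Polynomial

theorem eqOn_zero_of_hasDerivAt_pow {E : Type*} [NormedRing E] [NormedAlgebra ℝ E] {n : ℕ}
    (hn : n ≠ 0) {z : ℝ → E} {a b t₀ : ℝ} (hz : ∀ t ∈ Icc a b, HasDerivAt z (z t ^ n) t)
    (ht₀ : t₀ ∈ Icc a b) (hzero : z t₀ = 0) : EqOn z 0 (Icc a b) := by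
  have hcont : ContinuousOn z (Icc a b) := fun t ht ↦ (hz t ht).continuousAt.continuousWithinAt
  obtain ⟨K, hK⟩ := ((contDiff_id (𝕜 := ℝ) |>.pow n).locallyLipschitz.locallyLipschitzOn
    (s := insert 0 (z '' Icc a b))).exists_lipschitzOnWith_of_compact
    ((isCompact_Icc.image_of_continuousOn hcont).insert 0)
  have hzs : ∀ t ∈ Icc a b, z t ∈ insert 0 (z '' Icc a b) := fun t ht ↦
    mem_insert_of_mem _ (mem_image_of_mem z ht)
  have h0 : ∀ t : ℝ, HasDerivAt (0 : ℝ → E) (0 ^ n) t := fun t ↦ by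
    rw [zero_pow hn]; exact hasDerivAt_const t 0
  rw [← Icc_union_Icc_eq_Icc ht₀.1 ht₀.2]
  refine EqOn.union ?_ ?_
  · exact ODE_solution_unique_of_mem_Icc_left (v := fun _ x ↦ x ^ n) (fun _ _ ↦ hK)
      (hcont.mono (Icc_subset_Icc_right ht₀.2))
      (fun t ht ↦ (hz t ⟨ht.1.le, ht.2.trans ht₀.2⟩).hasDerivWithinAt)
      (fun t ht ↦ hzs t ⟨ht.1.le, ht.2.trans ht₀.2⟩) continuousOn_const
      (fun t _ ↦ (h0 t).hasDerivWithinAt) (fun _ _ ↦ mem_insert _ _) hzero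
  · exact ODE_solution_unique_of_mem_Icc_right (v := fun _ x ↦ x ^ n) (fun _ _ ↦ hK)
      (hcont.mono (Icc_subset_Icc_left ht₀.1))
      (fun t ht ↦ (hz t ⟨ht₀.1.trans ht.1, ht.2.le⟩).hasDerivWithinAt)
      (fun t ht ↦ hzs t ⟨ht₀.1.trans ht.1, ht.2.le⟩) continuousOn_const
      (fun t _ ↦ (h0 t).hasDerivWithinAt) (fun _ _ ↦ mem_insert _ _) hzero

section RCLike

variable {𝕜 : Type*} [RCLike 𝕜] {m : ℕ} {z : ℝ → 𝕜}

theorem hasDerivAt_inv_pow_add_mul {t : ℝ} (hz : HasDerivAt z (z t ^ (m + 1)) t)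
    (h0 : z t ≠ 0) : HasDerivAt (fun s : ℝ ↦ (z s ^ m)⁻¹ + m * s) 0 t := by
  have hpow : HasDerivAt (fun s ↦ z s ^ m) (m * z t ^ (m - 1) * z t ^ (m + 1)) t := by
    simpa [Function.comp_def, mul_assoc] using (hasDerivAt_pow m (z t)).comp t hz
  have hlin : HasDerivAt (fun s : ℝ ↦ (m : 𝕜) * s) m t := by
    simpa using (RCLike.ofRealCLM (K := 𝕜)).hasDerivAt.const_mul (m : 𝕜)
  refine ((hpow.inv (pow_ne_zero m h0)).add hlin).congr_deriv ?_
  rcases m with _ | m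
  · simp
  · rw [Nat.add_sub_cancel]
    field_simp
    ring

theorem inv_pow_eq_of_hasDerivAt_pow_succ {a b : ℝ} (hab : a ≤ b)
    (hz : ∀ t ∈ Icc a b, HasDerivAt z (z t ^ (m + 1)) t) (h0 : ∀ t ∈ Icc a b, z t ≠ 0) :
    (z b ^ m)⁻¹ = (z a ^ m)⁻¹ - m * ((b : 𝕜) - a) := by
  have hderiv : ∀ t ∈ Icc a b, HasDerivAt (fun s : ℝ ↦ (z s ^ m)⁻¹ + m * s) 0 t :=
    fun t ht ↦ hasDerivAt_inv_pow_add_mul (hz t ht) (h0 t ht)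
  have hconst := constant_of_has_deriv_right_zero
    (fun t ht ↦ (hderiv t ht).continuousAt.continuousWithinAt)
    (fun t ht ↦ (hderiv t (Ico_subset_Icc_self ht)).hasDerivWithinAt) b ⟨hab, le_rfl⟩
  linear_combination hconst

theorem eqOn_zero_of_hasDerivAt_pow_succ_of_eq (hm : m ≠ 0) {a b : ℝ} (hab : a < b)
    (hz : ∀ t ∈ Icc a b, HasDerivAt z (z t ^ (m + 1)) t) (hper : z b = z a) :
    EqOn z 0 (Icc a b) := by
  by_cases hzero : ∃ t ∈ Icc a b, z t = 0
  · obtain ⟨t₀, ht₀, h⟩ := hzero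
    exact eqOn_zero_of_hasDerivAt_pow m.succ_ne_zero hz ht₀ h
  have hcons := inv_pow_eq_of_hasDerivAt_pow_succ hab.le hz fun t ht h ↦ hzero ⟨t, ht, h⟩
  rw [hper] at hcons
  have : (m : 𝕜) * ((b : 𝕜) - a) = 0 := by linear_combination hcons
  simp [hm, sub_eq_zero, hab.ne'] at this

end RCLike

theorem Complex.ncard_setOf_eq_zero_or_pow_eq {m : ℕ} (hm : m ≠ 0) {a : ℂ} (ha : a ≠ 0) :
    {c : ℂ | c = 0 ∨ c ^ m = a}.ncard = m + 1 := by
  have hroots : {c : ℂ | c = 0 ∨ c ^ m = a} = insert 0 ↑(nthRootsFinset m a) := by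
    ext c
    simp [mem_nthRootsFinset (Nat.pos_of_ne_zero hm)]
  have h0 : (0 : ℂ) ∉ nthRootsFinset m a := by
    simp [mem_nthRootsFinset (Nat.pos_of_ne_zero hm), zero_pow hm, ha.symm]
  have hprim := Complex.isPrimitiveRoot_exp m hm
  classical
  rw [hroots, ncard_insert_of_notMem (by exact_mod_cast h0), ncard_coe_finset,
    nthRootsFinset_def, Multiset.toFinset_card_of_nodup (hprim.nthRoots_nodup ha),
    hprim.card_nthRoots, if_pos (IsAlgClosed.exists_pow_nat_eq a (Nat.pos_of_ne_zero hm))]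

theorem stmt_5 (n : ℕ) (hn : 2 ≤ n) (ω : ℝ) (hω : 0 < ω) :
    (∀ z : ℝ → ℂ,
      (∀ t ∈ Set.Icc (0 : ℝ) ω, HasDerivAt z ((z t) ^ n) t) →
      (z ω = z 0 ↔ ∃ c : ℂ, (c = 0 ∨ c ^ (n - 1) = -1 / (((n : ℂ) - 1) * ω)) ∧
        ∀ t ∈ Set.Icc (0 : ℝ) ω, z t = c)) ∧
    {c : ℂ | c = 0 ∨ c ^ (n - 1) = -1 / (((n : ℂ) - 1) * ω)}.ncard = n := by
  obtain ⟨m, rfl⟩ : ∃ m, n = m + 1 := ⟨n - 1, by omega⟩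
  have hm : m ≠ 0 := by omega
  simp only [Nat.add_sub_cancel, Nat.cast_add, Nat.cast_one, add_sub_cancel_right]
  refine ⟨fun z hz ↦ ⟨fun hper ↦ ?_, ?_⟩, ?_⟩
  · exact ⟨0, Or.inl rfl, fun t ht ↦ eqOn_zero_of_hasDerivAt_pow_succ_of_eq hm hω hz hper ht⟩
  · rintro ⟨c, -, hc⟩
    rw [hc ω ⟨hω.le, le_rfl⟩, hc 0 ⟨le_rfl, hω.le⟩]
  · refine Complex.ncard_setOf_eq_zero_or_pow_eq hm ?_
    have hω' : (ω : ℂ) ≠ 0 := by exact_mod_cast hω.ne'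
    simp [hm, hω']
end

section
/- Consider the polar angular equation θ' = r^{n-1} sin((n-1)θ) + r^{n-2} α(t) sin((n-2)θ) + r^{n-3} β(t) sin((n-3)θ) associated with z' = zⁿ + α(t)z^{n-1} + β(t)z^{n-2}. Suppose n ≥ 4, β(t) ≤ 0 for all t, k is an odd integer with 3 ≤ k ≤ n−3, and r > 0. Then at θ = kπ/(n−2): θ' ≤ r^{n-3}β(t) sin((n−3)kπ/(n−2)) + r^{n-1} sin((n−1)kπ/(n−2)) < 0, and at θ = (k−1)π/(n−2): θ' > 0. -/
theorem stmt_17 (n k : ℕ) (hn : 4 ≤ n) (hk : Odd k) (hk1 : 3 ≤ k) (hk2 : k ≤ n - 3)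
    (α β : ℝ → ℝ) (hβ : ∀ t, β t ≤ 0) (t r : ℝ) (hr : 0 < r)
    (Θ' : ℝ → ℝ)
    (hΘ : ∀ θ : ℝ, Θ' θ = r ^ (n - 1) * Real.sin (((n : ℝ) - 1) * θ)
      + r ^ (n - 2) * α t * Real.sin (((n : ℝ) - 2) * θ)
      + r ^ (n - 3) * β t * Real.sin (((n : ℝ) - 3) * θ))
    (θ₁ θ₂ : ℝ)
    (hθ₁ : θ₁ = (k : ℝ) * Real.pi / ((n : ℝ) - 2))
    (hθ₂ : θ₂ = ((k : ℝ) - 1) * Real.pi / ((n : ℝ) - 2)) :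
    (Θ' θ₁ ≤ r ^ (n - 3) * β t * Real.sin (((n : ℝ) - 3) * θ₁)
        + r ^ (n - 1) * Real.sin (((n : ℝ) - 1) * θ₁) ∧
      r ^ (n - 3) * β t * Real.sin (((n : ℝ) - 3) * θ₁)
        + r ^ (n - 1) * Real.sin (((n : ℝ) - 1) * θ₁) < 0) ∧
    0 < Θ' θ₂ := by
  obtain ⟨j, hj⟩ := hk
  have hkn : (k : ℝ) + 3 ≤ (n : ℝ) := by exact_mod_cast (by omega : k + 3 ≤ n)
  have hk3 : (3 : ℝ) ≤ (k : ℝ) := by exact_mod_cast hk1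
  have hn2 : (0 : ℝ) < (n : ℝ) - 2 := by linarith
  have hpi := Real.pi_pos
  -- trig values at kπ
  have hjk : (k : ℝ) = 2 * j + 1 := by exact_mod_cast hj
  have hcosk : Real.cos ((k : ℝ) * Real.pi) = -1 := by
    have : (k : ℝ) * Real.pi = (j : ℝ) * (2 * Real.pi) + Real.pi := by rw [hjk]; ring
    rw [this, Real.cos_nat_mul_two_pi_add_pi]
  have hsink : Real.sin ((k : ℝ) * Real.pi) = 0 := Real.sin_nat_mul_pi k
  have hcosk1 : Real.cos (((k : ℝ) - 1) * Real.pi) = 1 := by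
    have : ((k : ℝ) - 1) * Real.pi = (j : ℝ) * (2 * Real.pi) := by rw [hjk]; ring
    rw [this, Real.cos_nat_mul_two_pi]
  have hsink1 : Real.sin (((k : ℝ) - 1) * Real.pi) = 0 := by
    have : ((k : ℝ) - 1) * Real.pi = (j : ℝ) * (2 * Real.pi) := by rw [hjk]; ring
    rw [this]
    have h2j : (j : ℝ) * (2 * Real.pi) = ((2 * j : ℕ) : ℝ) * Real.pi := by push_cast; ring
    rw [h2j]; exact Real.sin_nat_mul_pi _
  -- θ₁ bounds
  have hθ₁pos : 0 < θ₁ := by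
    rw [hθ₁]; positivity
  have hθ₁lt : θ₁ < Real.pi := by
    rw [hθ₁, div_lt_iff₀ hn2]
    nlinarith
  have hsinθ₁ : 0 < Real.sin θ₁ := Real.sin_pos_of_pos_of_lt_pi hθ₁pos hθ₁lt
  -- θ₂ bounds
  have hθ₂pos : 0 < θ₂ := by
    rw [hθ₂]
    apply div_pos _ hn2
    nlinarith
  have hθ₂lt : θ₂ < Real.pi := by
    rw [hθ₂, div_lt_iff₀ hn2]
    nlinarith
  have hsinθ₂ : 0 < Real.sin θ₂ := Real.sin_pos_of_pos_of_lt_pi hθ₂pos hθ₂lt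
  -- angle decompositions
  have e1 : ((n : ℝ) - 1) * θ₁ = (k : ℝ) * Real.pi + θ₁ := by
    rw [hθ₁]; field_simp; ring
  have e2 : ((n : ℝ) - 2) * θ₁ = (k : ℝ) * Real.pi := by
    rw [hθ₁]; field_simp
  have e3 : ((n : ℝ) - 3) * θ₁ = (k : ℝ) * Real.pi - θ₁ := by
    rw [hθ₁]; field_simp; ring
  have e4 : ((n : ℝ) - 1) * θ₂ = ((k : ℝ) - 1) * Real.pi + θ₂ := by
    rw [hθ₂]; field_simp; ring
  have e5 : ((n : ℝ) - 2) * θ₂ = ((k : ℝ) - 1) * Real.pi := by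
    rw [hθ₂]; field_simp
  have e6 : ((n : ℝ) - 3) * θ₂ = ((k : ℝ) - 1) * Real.pi - θ₂ := by
    rw [hθ₂]; field_simp; ring
  -- sine values
  have s1 : Real.sin (((n : ℝ) - 1) * θ₁) = -Real.sin θ₁ := by
    rw [e1, Real.sin_add, hsink, hcosk]; ring
  have s2 : Real.sin (((n : ℝ) - 2) * θ₁) = 0 := by rw [e2, hsink]
  have s3 : Real.sin (((n : ℝ) - 3) * θ₁) = Real.sin θ₁ := by
    rw [e3, Real.sin_sub, hsink, hcosk]; ring
  have s4 : Real.sin (((n : ℝ) - 1) * θ₂) = Real.sin θ₂ := by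
    rw [e4, Real.sin_add, hsink1, hcosk1]; ring
  have s5 : Real.sin (((n : ℝ) - 2) * θ₂) = 0 := by rw [e5, hsink1]
  have s6 : Real.sin (((n : ℝ) - 3) * θ₂) = -Real.sin θ₂ := by
    rw [e6, Real.sin_sub, hsink1, hcosk1]; ring
  have hr1 : (0 : ℝ) < r ^ (n - 1) := pow_pos hr _
  have hr3 : (0 : ℝ) < r ^ (n - 3) := pow_pos hr _
  have hβt := hβ t
  have hA : r ^ (n - 3) * β t ≤ 0 := mul_nonpos_of_nonneg_of_nonpos hr3.le hβt
  refine ⟨⟨?_, ?_⟩, ?_⟩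
  · rw [hΘ θ₁, s2]
    simp only [mul_zero, zero_mul, add_zero]
    linarith
  · rw [s1, s3]
    have h1 : r ^ (n - 3) * β t * Real.sin θ₁ ≤ 0 :=
      mul_nonpos_of_nonpos_of_nonneg hA hsinθ₁.le
    have h2 : 0 < r ^ (n - 1) * Real.sin θ₁ := mul_pos hr1 hsinθ₁
    nlinarith
  · rw [hΘ θ₂, s4, s5, s6]
    simp only [mul_zero, zero_mul, add_zero]
    have h1 : 0 ≤ r ^ (n - 3) * β t * -Real.sin θ₂ :=
      by
        have h := mul_nonneg (neg_nonneg.2 hA) hsinθ₂.le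
        calc (0:ℝ) ≤ -(r ^ (n - 3) * β t) * Real.sin θ₂ := h
          _ = r ^ (n - 3) * β t * -Real.sin θ₂ := by ring
    have h2 : 0 < r ^ (n - 1) * Real.sin θ₂ := mul_pos hr1 hsinθ₂
    linarith
end

section
/- Let q(c) = z(ω, c) − c be the displacement function of z' = zⁿ + P₁(t)z^{n-1} + ⋯ + P_{n-1}(t)z (P_n ≡ 0, real continuous coefficients, ω > 0), restricted to real c. If ρ is such that every real solution with z(t₀) ≥ ρ at some t₀ ∈ [0,ω] satisfies z' ≥ ½zⁿ while z ≥ ρ, then every real zero of q lies in [−ρ', ρ'] for some ρ' depending only on ρ, n, ω; in particular, the set of positive real c with z(·, c) periodic is bounded. -/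
/-!
Where `z ≥ ρ` the field is at least `zⁿ / 2 > 0`, so a solution starting at or above `ρ` stays
there and increases strictly: it cannot return to its initial value. On the compact time interval
`[0, ω]` the lower-order terms are dominated by `zⁿ` once `|z| ≥ R`, so for `z ≤ -R` the field has
the sign of `zⁿ`. For `-z` the derivative is then positive above `R` when `n` is odd and negative
when `n` is even, and the latter case reduces to the former by reversing time.
-/

open Set

section Periodic

variable {z g : ℝ → ℝ} {ω R : ℝ}

theorem lt_of_periodic_of_deriv_pos_above (hω : 0 < ω)
    (hz : ∀ t ∈ Icc 0 ω, HasDerivAt z (g t) t) (hg : ∀ t ∈ Icc 0 ω, R ≤ z t → 0 < g t)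
    (hper : z ω = z 0) : z 0 < R := by
  by_contra! h0
  have hcont : ContinuousOn z (Icc 0 ω) := fun t ht => (hz t ht).continuousAt.continuousWithinAt
  have habove : ∀ t ∈ Icc 0 ω, R ≤ z t :=
    image_le_of_deriv_right_lt_deriv_boundary' continuousOn_const
      (fun _ _ => hasDerivWithinAt_const _ _ R) h0 hcont
      (fun t ht => (hz t (Ico_subset_Icc_self ht)).hasDerivWithinAt)
      (fun t ht hRt => hg t (Ico_subset_Icc_self ht) hRt.le)
  have hmono : StrictMonoOn z (Icc 0 ω) :=
    strictMonoOn_of_hasDerivWithinAt_pos (convex_Icc 0 ω) hcont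
      (fun t ht => (hz t (interior_subset ht)).hasDerivWithinAt)
      (fun t ht => hg t (interior_subset ht) (habove t (interior_subset ht)))
  exact (hmono (left_mem_Icc.2 hω.le) (right_mem_Icc.2 hω.le) hω).ne hper.symm

theorem lt_of_periodic_of_deriv_neg_above (hω : 0 < ω)
    (hz : ∀ t ∈ Icc 0 ω, HasDerivAt z (g t) t) (hg : ∀ t ∈ Icc 0 ω, R ≤ z t → g t < 0)
    (hper : z ω = z 0) : z 0 < R := by
  have hrev : ∀ t ∈ Icc 0 ω, ω - t ∈ Icc 0 ω := fun t ht => ⟨by linarith [ht.2], by linarith [ht.1]⟩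
  have := lt_of_periodic_of_deriv_pos_above (z := fun t => z (ω - t)) (g := fun t => -g (ω - t))
    hω (fun t ht => by simpa using (hz _ (hrev t ht)).comp_const_sub ω t)
    (fun t ht h => neg_pos.2 (hg _ (hrev t ht) h)) (by simp [hper])
  simpa [hper] using this

end Periodic

theorem abs_sum_mul_pow_le {ι : Type*} (s : Finset ι) (a : ι → ℝ) (e : ι → ℕ) {k : ℕ}
    (he : ∀ i ∈ s, e i ≤ k) {x : ℝ} (hx : 1 ≤ |x|) :
    |∑ i ∈ s, a i * x ^ e i| ≤ (∑ i ∈ s, |a i|) * |x| ^ k :=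
  calc |∑ i ∈ s, a i * x ^ e i| ≤ ∑ i ∈ s, |a i| * |x| ^ e i := by
        simpa only [abs_mul, abs_pow] using Finset.abs_sum_le_sum_abs (fun i => a i * x ^ e i) s
    _ ≤ ∑ i ∈ s, |a i| * |x| ^ k := Finset.sum_le_sum fun i hi => by gcongr; exact he i hi
    _ = (∑ i ∈ s, |a i|) * |x| ^ k := (Finset.sum_mul ..).symm

theorem exists_abs_sum_mul_pow_sub_lt_pow {n : ℕ} (hn : 1 ≤ n) {P : ℕ → ℝ → ℝ}
    (hP : ∀ i, Continuous (P i)) (ω : ℝ) :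
    ∃ R > 0, ∀ t ∈ Icc 0 ω, ∀ x : ℝ, R ≤ |x| →
      |∑ i ∈ Finset.Icc 1 (n - 1), P i t * x ^ (n - i)| < |x| ^ n := by
  obtain ⟨C, hC⟩ := isCompact_Icc.exists_bound_of_continuousOn (s := Icc 0 ω)
    (continuous_finsetSum (Finset.Icc 1 (n - 1)) fun i _ => (hP i).abs).continuousOn
  refine ⟨max C 1 + 1, by positivity, fun t ht x hx => ?_⟩
  have hx1 : 1 ≤ |x| := by linarith [le_max_right C 1]
  have hCx : C < |x| := by linarith [le_max_left C 1]
  have hsum : ∑ i ∈ Finset.Icc 1 (n - 1), |P i t| ≤ C := (le_abs_self _).trans (hC t ht)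
  calc |∑ i ∈ Finset.Icc 1 (n - 1), P i t * x ^ (n - i)|
      ≤ (∑ i ∈ Finset.Icc 1 (n - 1), |P i t|) * |x| ^ (n - 1) :=
        abs_sum_mul_pow_le _ _ _ (fun i hi => Nat.sub_le_sub_left (Finset.mem_Icc.1 hi).1 n) hx1
    _ ≤ C * |x| ^ (n - 1) := by gcongr
    _ < |x| * |x| ^ (n - 1) := by gcongr
    _ = |x| ^ n := by rw [← pow_succ', Nat.sub_add_cancel hn]

theorem neg_lt_of_periodic_of_abs_lt_pow {n : ℕ} {S : ℝ → ℝ → ℝ} {z : ℝ → ℝ} {ω R : ℝ}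
    (hω : 0 < ω) (hR : 0 < R) (hS : ∀ t ∈ Icc 0 ω, ∀ x, R ≤ |x| → |S t x| < |x| ^ n)
    (hz : ∀ t ∈ Icc 0 ω, HasDerivAt z (z t ^ n + S t (z t)) t) (hper : z ω = z 0) :
    -R < z 0 := by
  have hz' : ∀ t ∈ Icc 0 ω, HasDerivAt (-z) (-(z t ^ n + S t (z t))) t :=
    fun t ht => (hz t ht).neg
  have hper' : (-z) ω = (-z) 0 := by simp [hper]
  have hdom : ∀ t ∈ Icc 0 ω, R ≤ (-z) t → |S t (z t)| < |z t| ^ n :=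
    fun t ht h => hS t ht _ (h.trans (neg_le_abs _))
  suffices (-z) 0 < R by simp only [Pi.neg_apply] at this; linarith
  rcases Nat.even_or_odd n with he | ho
  · refine lt_of_periodic_of_deriv_neg_above hω hz' (fun t ht h => ?_) hper'
    have := abs_lt.1 (hdom t ht h)
    rw [he.pow_abs] at this
    linarith
  · refine lt_of_periodic_of_deriv_pos_above hω hz' (fun t ht h => ?_) hper'
    have hneg : z t < 0 := by simp only [Pi.neg_apply] at h; linarith
    have := abs_lt.1 (hdom t ht h)
    rw [abs_of_neg hneg, ho.neg_pow] at this
    linarith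

theorem stmt_19 (n : ℕ) (hn : 2 ≤ n) (ω ρ : ℝ) (hω : 0 < ω) (hρ : 0 < ρ)
    (P : ℕ → ℝ → ℝ) (hP : ∀ i, Continuous (P i))
    (hρ' : ∀ x : ℝ, ∀ t ∈ Set.Icc (0 : ℝ) ω, ρ ≤ x →
      (1 / 2) * x ^ n ≤ x ^ n + ∑ i ∈ Finset.Icc 1 (n - 1), P i t * x ^ (n - i)) :
    ∃ ρ' > 0, ∀ z : ℝ → ℝ,
      (∀ t ∈ Set.Icc (0 : ℝ) ω, HasDerivAt z
        ((z t) ^ n + ∑ i ∈ Finset.Icc 1 (n - 1), P i t * (z t) ^ (n - i)) t) →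
      z ω = z 0 → |z 0| ≤ ρ' := by
  obtain ⟨R, hR, hdom⟩ := exists_abs_sum_mul_pow_sub_lt_pow (by omega : 1 ≤ n) hP ω
  refine ⟨max ρ R, lt_max_of_lt_left hρ, fun z hz hper => abs_le.2 ⟨?_, ?_⟩⟩
  · have := neg_lt_of_periodic_of_abs_lt_pow hω hR hdom hz hper
    linarith [le_max_right ρ R]
  · have hpos : ∀ t ∈ Icc 0 ω, ρ ≤ z t → 0 < 1 / 2 * z t ^ n := fun t _ hzt => by
      have := hρ.trans_le hzt
      positivity
    have := lt_of_periodic_of_deriv_pos_above hω hz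
      (fun t ht hzt => (hpos t ht hzt).trans_le (hρ' _ t ht hzt)) hper
    linarith [le_max_left ρ R]
end
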